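/- Let k be a commutative ring, A a commutative k-algebra, p ∈ ℕ and Δ ⊆ ℕ^p a nonempty co-ideal. For all D, E ∈ HS^p_k(A;Δ), the group commutator [D,E] = D∘E∘D*∘E* satisfies ℓ([D,E]) ≥ ℓ(D) + ℓ(E); that is, ([D,E])_α = 0 for every nonzero α ∈ Δ with |α| < ℓ(D) + ℓ(E) (with the convention that the inequality holds trivially when ℓ(D) or ℓ(E) is ∞). -/

import Mathlib

open scoped Classical

namespace HS

/-- multi-indices in `ℕ^p` -/
abbrev MIdx (p : ℕ) := Fin p → ℕ

/-- the total weight `|α|` of a multi-index -/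
def wt {p : ℕ} (α : MIdx p) : ℕ := ∑ i, α i

/-- a non-empty co-ideal of `ℕ^p` -/
def IsCoideal {p : ℕ} (Δ : Set (MIdx p)) : Prop :=
  Δ.Nonempty ∧ ∀ ⦃α : MIdx p⦄, α ∈ Δ → ∀ ⦃β : MIdx p⦄, β ≤ α → β ∈ Δ

/-- Convolution product of two power series, given by their coefficient families:
this is the multiplication of `R[[s]]_Δ` (in terms of representatives). -/
def sconv {p : ℕ} {R : Type*} [NonUnitalNonAssocSemiring R] (f g : MIdx p → R) : MIdx p → R :=
  fun α => ∑ β ∈ Finset.Iic α, f β * g (α - β)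

/-- Applying a series of linear operators to a series of module elements; for an
operator family `f`, `fapply f` is the induced `k[[s]]_Δ`-linear map `f̃ = ∑ f_β s^β`. -/
def fapply {p : ℕ} {k M N : Type*} [Semiring k] [AddCommMonoid M] [AddCommMonoid N]
    [Module k M] [Module k N] (f : MIdx p → (M →ₗ[k] N)) (m : MIdx p → M) : MIdx p → N :=
  fun α => ∑ β ∈ Finset.Iic α, f β (m (α - β))

/-- a series of scalars acting on a series of module elements:
the module structure of `M[[s]]_Δ` over `A[[s]]_Δ` (in terms of representatives). -/
def smul' {p : ℕ} {A M : Type*} [Semiring A] [AddCommMonoid M] [Module A M]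
    (a : MIdx p → A) (m : MIdx p → M) : MIdx p → M :=
  fun α => ∑ β ∈ Finset.Iic α, a β • m (α - β)

/-- the unit (delta) series `1` -/
def one' {p : ℕ} {R : Type*} [Zero R] [One R] : MIdx p → R :=
  fun α => if α = 0 then 1 else 0

/-- `D` is a `(p,Δ)`-variate Hasse–Schmidt derivation of `A` over `k`:
`D_0 = id` and the Leibniz rule `D_α(xy) = ∑_{β+γ=α} D_β(x) D_γ(y)` for `α ∈ Δ`. -/
def IsHS (k A : Type*) [CommRing k] [CommRing A] [Algebra k A] {p : ℕ}
    (Δ : Set (MIdx p)) (D : MIdx p → Module.End k A) : Prop :=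
  D 0 = 1 ∧ ∀ α ∈ Δ, ∀ x y : A,
    D α (x * y) = ∑ β ∈ Finset.Iic α, D β x * D (α - β) y

/-- `ℓ(D) = min{ |β| : β ∈ Δ, β ≠ 0, D_β ≠ 0 } ∈ ℕ∞`, with `ℓ(𝕀) = ⊤ = ∞`. -/
noncomputable def ell {k A : Type*} [CommRing k] [CommRing A] [Algebra k A] {p : ℕ}
    (Δ : Set (MIdx p)) (D : MIdx p → Module.End k A) : ℕ∞ :=
  sInf {n : ℕ∞ | ∃ β ∈ Δ, β ≠ 0 ∧ D β ≠ 0 ∧ n = (wt β : ℕ∞)}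

/-!
On the coefficients of degree at most `α`, the series `D` and `E` commute: a product
`D_β E_γ` with `β, γ ≠ 0` and `D_β, E_γ ≠ 0` has degree `|β| + |γ| ≥ ℓ(D) + ℓ(E) > |α|`, and the
terms with `β = 0` or `γ = 0` commute because `D_0 = E_0 = id`. Hence, up to degree `α`,
`D∘E∘D*∘E* = E∘(D∘D*)∘E* = E∘E* = 𝕀`.
-/

lemma wt_mono {p : ℕ} {β α : MIdx p} (h : β ≤ α) : wt β ≤ wt α :=
  Finset.sum_le_sum fun i _ => h i

lemma wt_add {p : ℕ} (β γ : MIdx p) : wt (β + γ) = wt β + wt γ := by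
  simp [wt, Finset.sum_add_distrib]

lemma sum_Iic_tsub {p : ℕ} {M : Type*} [AddCommMonoid M] (α : MIdx p) (f : MIdx p → M) :
    ∑ β ∈ Finset.Iic α, f (α - β) = ∑ β ∈ Finset.Iic α, f β := by
  refine Finset.sum_nbij' (α - ·) (α - ·) ?_ ?_ ?_ ?_ ?_ <;>
    simp +contextual [tsub_tsub_cancel_of_le]

section sconv

variable {p : ℕ} {R : Type*}

lemma sconv_congr_left [NonUnitalNonAssocSemiring R] {f f' g : MIdx p → R} {α : MIdx p}
    (h : ∀ β ≤ α, f β = f' β) : sconv f g α = sconv f' g α :=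
  Finset.sum_congr rfl fun β hβ => by rw [h β (Finset.mem_Iic.mp hβ)]

lemma sconv_comm_of_commute [NonUnitalNonAssocSemiring R] {f g : MIdx p → R} {α : MIdx p}
    (h : ∀ β ≤ α, Commute (f β) (g (α - β))) : sconv f g α = sconv g f α := by
  rw [sconv, sconv, ← sum_Iic_tsub α fun β => g β * f (α - β)]
  refine Finset.sum_congr rfl fun β hβ => ?_
  rw [tsub_tsub_cancel_of_le (Finset.mem_Iic.mp hβ)]
  exact (h β (Finset.mem_Iic.mp hβ)).eq

lemma sconv_eq_of_eq_one' [NonAssocSemiring R] {f g : MIdx p → R} {α : MIdx p}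
    (h : ∀ β ≤ α, g β = one' β) : sconv f g α = f α := by
  unfold sconv
  rw [Finset.sum_eq_single_of_mem α (Finset.mem_Iic.mpr le_rfl)]
  · rw [h (α - α) tsub_le_self, tsub_self]
    simp [one']
  · intro β hβ hne
    have hβα : α - β ≠ 0 := fun h0 =>
      hne (le_antisymm (Finset.mem_Iic.mp hβ) (tsub_eq_zero_iff_le.mp h0))
    simp [h (α - β) tsub_le_self, one', hβα]

lemma sconv_assoc [NonUnitalSemiring R] (f g h : MIdx p → R) (α : MIdx p) :
    sconv (sconv f g) h α = sconv f (sconv g h) α := by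
  unfold sconv
  simp_rw [Finset.sum_mul, Finset.mul_sum]
  rw [Finset.sum_sigma', Finset.sum_sigma']
  refine Finset.sum_nbij' (fun i => ⟨i.2, i.1 - i.2⟩) (fun j => ⟨j.1 + j.2, j.1⟩)
    ?_ ?_ ?_ ?_ ?_
  · rintro ⟨β, γ⟩ hi
    simp only [Finset.mem_sigma, Finset.mem_Iic] at hi ⊢
    exact ⟨hi.2.trans hi.1, tsub_le_tsub_right hi.1 γ⟩
  · rintro ⟨β, γ⟩ hj
    simp only [Finset.mem_sigma, Finset.mem_Iic] at hj ⊢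
    exact ⟨(add_le_add_right hj.2 β).trans (add_tsub_cancel_of_le hj.1).le, le_self_add⟩
  · rintro ⟨β, γ⟩ hi
    simp only [Finset.mem_sigma, Finset.mem_Iic] at hi
    simp [add_tsub_cancel_of_le hi.2]
  · rintro ⟨β, γ⟩ -
    simp
  · rintro ⟨β, γ⟩ hi
    simp only [Finset.mem_sigma, Finset.mem_Iic] at hi
    simp only [tsub_tsub, add_tsub_cancel_of_le hi.2, mul_assoc]

end sconv

section ell

variable {k A : Type*} [CommRing k] [CommRing A] [Algebra k A] {p : ℕ} {Δ : Set (MIdx p)}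

lemma ell_le_wt {D : MIdx p → Module.End k A} {β : MIdx p} (hβ : β ∈ Δ) (hβ0 : β ≠ 0)
    (hDβ : D β ≠ 0) : ell Δ D ≤ wt β :=
  sInf_le ⟨β, hβ, hβ0, hDβ, rfl⟩

lemma commute_of_wt_add_lt {D E : MIdx p → Module.End k A} (hD0 : D 0 = 1) (hE0 : E 0 = 1)
    {β γ : MIdx p} (hβ : β ∈ Δ) (hγ : γ ∈ Δ) (hlt : (wt β + wt γ : ℕ∞) < ell Δ D + ell Δ E) :
    Commute (D β) (E γ) := by
  rcases eq_or_ne β 0 with rfl | hβ0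
  · rw [hD0]; exact Commute.one_left _
  rcases eq_or_ne γ 0 with rfl | hγ0
  · rw [hE0]; exact Commute.one_right _
  rcases eq_or_ne (D β) 0 with hDβ | hDβ
  · rw [hDβ]; exact Commute.zero_left _
  rcases eq_or_ne (E γ) 0 with hEγ | hEγ
  · rw [hEγ]; exact Commute.zero_right _
  exact absurd hlt (not_lt.mpr
    (add_le_add (ell_le_wt hβ hβ0 hDβ) (ell_le_wt hγ hγ0 hEγ)))

lemma sconv_comm_of_wt_lt {D E : MIdx p → Module.End k A} (hD0 : D 0 = 1) (hE0 : E 0 = 1)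
    {α : MIdx p} (hΔα : ∀ β ≤ α, β ∈ Δ) (hlt : (wt α : ℕ∞) < ell Δ D + ell Δ E) :
    sconv D E α = sconv E D α := by
  refine sconv_comm_of_commute fun β hβ => commute_of_wt_add_lt hD0 hE0
    (hΔα β hβ) (hΔα _ tsub_le_self) ?_
  rwa [← Nat.cast_add, ← wt_add, add_tsub_cancel_of_le hβ]

end ell

theorem stmt6_general (k A : Type*) [CommRing k] [CommRing A] [Algebra k A]
    (p : ℕ) (Δ : Set (MIdx p)) (hΔ : IsCoideal Δ)
    (D E Ds Es : MIdx p → Module.End k A)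
    (hD : IsHS k A Δ D) (hE : IsHS k A Δ E)
    (hD1 : ∀ α ∈ Δ, sconv D Ds α = (one' : MIdx p → Module.End k A) α)
    (hE1 : ∀ α ∈ Δ, sconv E Es α = (one' : MIdx p → Module.End k A) α) :
    ∀ α ∈ Δ, α ≠ 0 → (wt α : ℕ∞) < ell Δ D + ell Δ E →
      sconv (sconv (sconv D E) Ds) Es α = 0 := by
  intro α hα hα0 hlt
  have hΔα : ∀ β ≤ α, β ∈ Δ := fun β hβ => hΔ.2 hα hβ
  calc sconv (sconv (sconv D E) Ds) Es α
      = sconv (sconv (sconv E D) Ds) Es α :=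
        sconv_congr_left fun β hβ => sconv_congr_left fun γ hγ =>
          sconv_comm_of_wt_lt hD.1 hE.1 (fun δ hδ => hΔα δ (hδ.trans (hγ.trans hβ)))
            (lt_of_le_of_lt (by exact_mod_cast wt_mono (hγ.trans hβ)) hlt)
    _ = sconv (sconv E (sconv D Ds)) Es α :=
        sconv_congr_left fun β _ => sconv_assoc E D Ds β
    _ = sconv E Es α :=
        sconv_congr_left fun β hβ => sconv_eq_of_eq_one' fun γ hγ => hD1 γ (hΔα γ (hγ.trans hβ))
    _ = 0 := by simp [hE1 α hα, one', hα0]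

/-- For Hasse–Schmidt derivations `D, E ∈ HS^p_k(A;Δ)` with inverses
`D*, E*`, the group commutator `[D,E] = D∘E∘D*∘E*` satisfies `ℓ([D,E]) ≥ ℓ(D) + ℓ(E)`,
i.e. `[D,E]_α = 0` for every nonzero `α ∈ Δ` with `|α| < ℓ(D) + ℓ(E)` (in `ℕ∞`). -/
theorem stmt6 (k A : Type*) [CommRing k] [CommRing A] [Algebra k A]
    (p : ℕ) (Δ : Set (MIdx p)) (hΔ : IsCoideal Δ)
    (D E Ds Es : MIdx p → Module.End k A)
    (hD : IsHS k A Δ D) (hE : IsHS k A Δ E)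
    (hDs : IsHS k A Δ Ds) (hEs : IsHS k A Δ Es)
    (hD1 : ∀ α ∈ Δ, sconv D Ds α = (one' : MIdx p → Module.End k A) α)
    (hD2 : ∀ α ∈ Δ, sconv Ds D α = (one' : MIdx p → Module.End k A) α)
    (hE1 : ∀ α ∈ Δ, sconv E Es α = (one' : MIdx p → Module.End k A) α)
    (hE2 : ∀ α ∈ Δ, sconv Es E α = (one' : MIdx p → Module.End k A) α) :
    ∀ α ∈ Δ, α ≠ 0 → (wt α : ℕ∞) < ell Δ D + ell Δ E →
      sconv (sconv (sconv D E) Ds) Es α = 0 :=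
  stmt6_general k A p Δ hΔ D E Ds Es hD hE hD1 hE1

end HS
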